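/- There exists θ₂ ∈ (0,π/2), depending only on α, such that for all 0 < θ ≤ θ₂, all p ∈ ℍ¹ \ {0}, and all z ∈ ℝ with |z − z_p| ≤ |z_p|, the four points (0,0,z), (2x_p, 2y_p, z), (x_p − y_p tan θ, y_p + x_p tan θ, z), and (x_p + y_p tan θ, y_p − x_p tan θ, z) all belong to the closed ball B(p, r_p) in (ℍ¹, d_α), where r_p = d_α(0,p). Consequently the Euclidean convex hull Q(z, π(p), θ) of these four points is contained in B(p, r_p). -/

import Mathlib

/-! With `w = p⁻¹ q`, the condition `d_α(p, q) ≤ r` reads `ρ(w)² r² + z(w)² ≤ α² r⁴`. In the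
coordinates of `q` the left side is a sum of squares of affine functions, so balls are convex and
it suffices to check the four vertices. For `r = r_p` the condition is an equality at `q = 0`, so
changing the height to any `z` with `|z - z_p| ≤ |z_p|` keeps `0` and `2 π(p)` in the ball. The
rotated vertices move horizontally by `tan θ · ρ_p` and pick up a vertical term
`± tan θ · ρ_p² / 2`; using `ρ_p² ≤ α² r_p²` and `|z_p| ≤ α r_p²` this is absorbed as soon as
`(1 + α²/4) tan² θ + α tan θ ≤ 1`, which holds for `tan θ ≤ 1 / (2 (1 + α))`. -/

open Real

abbrev H : Type := ℝ × ℝ × ℝ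

noncomputable section

/-- Heisenberg group law on ℝ³. -/
def hmul (p q : H) : H :=
  (p.1 + q.1, p.2.1 + q.2.1, p.2.2 + q.2.2 + (p.1 * q.2.1 - p.2.1 * q.1) / 2)

/-- Heisenberg inverse. -/
def hinv (p : H) : H := (-p.1, -p.2.1, -p.2.2)

/-- Heisenberg dilation. -/
def hdil (l : ℝ) (p : H) : H := (l * p.1, l * p.2.1, l ^ 2 * p.2.2)

/-- Horizontal norm ρ. -/
def rho (p : H) : ℝ := Real.sqrt (p.1 ^ 2 + p.2.1 ^ 2)

/-- The homogeneous distance d_α whose unit ball at the origin is the Euclidean ball of radius α. -/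
def dA (α : ℝ) (p q : H) : ℝ :=
  Real.sqrt (((rho (hmul (hinv p) q)) ^ 2 +
      Real.sqrt ((rho (hmul (hinv p) q)) ^ 4 + 4 * α ^ 2 * (hmul (hinv p) q).2.2 ^ 2)) /
    (2 * α ^ 2))

open Set

/-- The positive root `s` of `α² s² = A s + c²`; `dA α p q ^ 2` is this root for
`A = ρ(p⁻¹q)²`, `c = z(p⁻¹q)`. -/
def homNormSq (α A c : ℝ) : ℝ := (A + √(A ^ 2 + 4 * α ^ 2 * c ^ 2)) / (2 * α ^ 2)

section homNormSq

variable {α A c : ℝ}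

lemma homNormSq_nonneg (hA : 0 ≤ A) : 0 ≤ homNormSq α A c := by
  unfold homNormSq; positivity

lemma le_sq_mul_homNormSq (hα : α ≠ 0) : A ≤ α ^ 2 * homNormSq α A c := by
  have hA : A ≤ √(A ^ 2 + 4 * α ^ 2 * c ^ 2) :=
    (le_abs_self A).trans (abs_le_sqrt (by nlinarith [sq_nonneg (α * c)]))
  rw [homNormSq, mul_div_assoc', le_div_iff₀ (by positivity)]
  nlinarith [mul_nonneg (sq_nonneg α) (sub_nonneg.2 hA)]

lemma homNormSq_quadratic (hα : α ≠ 0) :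
    α ^ 2 * homNormSq α A c ^ 2 = A * homNormSq α A c + c ^ 2 := by
  have hS := sq_sqrt (show 0 ≤ A ^ 2 + 4 * α ^ 2 * c ^ 2 by nlinarith [sq_nonneg (α * c)])
  unfold homNormSq
  set S := √(A ^ 2 + 4 * α ^ 2 * c ^ 2)
  field_simp
  linear_combination hS

lemma homNormSq_le_iff (hα : α ≠ 0) {s : ℝ} (hs : 0 < s) :
    homNormSq α A c ≤ s ↔ A * s + c ^ 2 ≤ α ^ 2 * s ^ 2 := by
  set s₀ := homNormSq α A c
  have hfactor : α ^ 2 * s ^ 2 - (A * s + c ^ 2) = (s - s₀) * (α ^ 2 * (s + s₀) - A) := by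
    linear_combination homNormSq_quadratic (A := A) (c := c) hα
  have hpos : 0 < α ^ 2 * (s + s₀) - A := by
    rw [mul_add]
    linarith [le_sq_mul_homNormSq (A := A) (c := c) hα, mul_pos (sq_pos_iff.2 hα) hs]
  rw [← sub_nonneg, ← sub_nonneg (b := _ + _), hfactor, mul_nonneg_iff_of_pos_right hpos]

end homNormSq

lemma hmul_hinv (p q : H) :
    hmul (hinv p) q =
      (q.1 - p.1, q.2.1 - p.2.1, q.2.2 - p.2.2 + (p.2.1 * q.1 - p.1 * q.2.1) / 2) := by
  simp only [hmul, hinv, Prod.mk.injEq]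
  refine ⟨by ring, by ring, by ring⟩

lemma rho_sq (p : H) : rho p ^ 2 = p.1 ^ 2 + p.2.1 ^ 2 := sq_sqrt (by positivity)

lemma dA_eq_sqrt_homNormSq (α : ℝ) (p q : H) :
    dA α p q = √(homNormSq α (rho (hmul (hinv p) q) ^ 2) (hmul (hinv p) q).2.2) := by
  rw [dA, homNormSq, ← pow_mul]

lemma dA_le_iff {α r : ℝ} (hα : 0 < α) (hr : 0 < r) (p q : H) :
    dA α p q ≤ r ↔ r ^ 2 * (q.1 - p.1) ^ 2 + r ^ 2 * (q.2.1 - p.2.1) ^ 2 +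
      (q.2.2 - p.2.2 + (p.2.1 * q.1 - p.1 * q.2.1) / 2) ^ 2 ≤ α ^ 2 * r ^ 4 := by
  rw [dA_eq_sqrt_homNormSq, sqrt_le_left hr.le, homNormSq_le_iff hα.ne' (by positivity),
    hmul_hinv, rho_sq]
  constructor <;> intro h <;> linarith

lemma hmul_hinv_zero (p : H) : hmul (hinv 0) p = p := by
  simp [hmul, hinv]

lemma dA_zero_sq (α : ℝ) (p : H) : dA α 0 p ^ 2 = homNormSq α (p.1 ^ 2 + p.2.1 ^ 2) p.2.2 := by
  rw [dA_eq_sqrt_homNormSq, hmul_hinv_zero, rho_sq, sq_sqrt (homNormSq_nonneg (by positivity))]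

lemma dA_zero_quartic {α : ℝ} (hα : α ≠ 0) (p : H) :
    (p.1 ^ 2 + p.2.1 ^ 2) * dA α 0 p ^ 2 + p.2.2 ^ 2 = α ^ 2 * dA α 0 p ^ 4 := by
  rw [show dA α 0 p ^ 4 = (dA α 0 p ^ 2) ^ 2 by ring, dA_zero_sq]
  linear_combination -homNormSq_quadratic hα

lemma dA_zero_pos {α : ℝ} (hα : α ≠ 0) {p : H} (hp : p ≠ 0) : 0 < dA α 0 p := by
  have hs := dA_zero_sq α p
  have hnn : 0 ≤ dA α 0 p := sqrt_nonneg _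
  refine hnn.lt_of_ne' fun h0 => hp ?_
  rw [h0, eq_comm, zero_pow two_ne_zero] at hs
  have hA := le_sq_mul_homNormSq (A := p.1 ^ 2 + p.2.1 ^ 2) (c := p.2.2) hα
  have hq := homNormSq_quadratic (A := p.1 ^ 2 + p.2.1 ^ 2) (c := p.2.2) hα
  rw [hs] at hA hq
  have h1 : p.1 = 0 := by nlinarith [sq_nonneg p.1, sq_nonneg p.2.1]
  have h2 : p.2.1 = 0 := by nlinarith [sq_nonneg p.1, sq_nonneg p.2.1]
  have h3 : p.2.2 = 0 := pow_eq_zero_iff two_ne_zero |>.1 (by linarith)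
  exact Prod.ext h1 (Prod.ext h2 h3)

lemma convexOn_sq_of_affine {E : Type*} [AddCommGroup E] [Module ℝ E] {f : E → ℝ}
    (hf : ∀ x y : E, ∀ a b : ℝ, a + b = 1 → f (a • x + b • y) = a * f x + b * f y) :
    ConvexOn ℝ univ fun x => f x ^ 2 := by
  refine ⟨convex_univ, fun x _ y _ a b ha hb hab => ?_⟩
  obtain rfl : b = 1 - a := by linarith
  simp only [smul_eq_mul, hf x y a (1 - a) hab]
  nlinarith [mul_nonneg ha hb, sq_nonneg (f x - f y)]

lemma convex_setOf_dA_le {α r : ℝ} (hα : 0 < α) (hr : 0 < r) (p : H) :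
    Convex ℝ {q : H | dA α p q ≤ r} := by
  have hx := convexOn_sq_of_affine (f := fun q : H => q.1 - p.1) fun x y a b hab => by
    simp only [Prod.fst_add, Prod.smul_fst, smul_eq_mul]
    linear_combination p.1 * hab
  have hy := convexOn_sq_of_affine (f := fun q : H => q.2.1 - p.2.1) fun x y a b hab => by
    simp only [Prod.fst_add, Prod.snd_add, Prod.smul_fst, Prod.smul_snd, smul_eq_mul]
    linear_combination p.2.1 * hab
  have hz := convexOn_sq_of_affine
    (f := fun q : H => q.2.2 - p.2.2 + (p.2.1 * q.1 - p.1 * q.2.1) / 2) fun x y a b hab => by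
    simp only [Prod.fst_add, Prod.snd_add, Prod.smul_fst, Prod.smul_snd, smul_eq_mul]
    linear_combination p.2.2 * hab
  have hF := ((hx.smul (sq_nonneg r)).add (hy.smul (sq_nonneg r))).add hz
  simpa [dA_le_iff hα hr] using hF.convex_le (α ^ 2 * r ^ 4)

lemma rotated_vertex_le {α r u zp w v t : ℝ} (hα : 0 ≤ α) (hr : 0 < r) (hu : 0 ≤ u) (ht : 0 ≤ t)
    (hE : u * r ^ 2 + zp ^ 2 = α ^ 2 * r ^ 4) (hw : |w| ≤ |zp|) (hv : |v| ≤ t * u / 2)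
    (htα : (1 + α ^ 2 / 4) * t ^ 2 + α * t ≤ 1) :
    t ^ 2 * u * r ^ 2 + (w + v) ^ 2 ≤ α ^ 2 * r ^ 4 := by
  have hzp : |zp| ≤ α * r ^ 2 :=
    abs_le_of_sq_le_sq (by nlinarith [mul_nonneg hu (sq_nonneg r)]) (by positivity)
  have huα : u ≤ α ^ 2 * r ^ 2 :=
    le_of_mul_le_mul_right (by nlinarith [sq_nonneg zp]) (pow_pos hr 2)
  have hwv : |w + v| ≤ |zp| + t * u / 2 := (abs_add_le w v).trans (add_le_add hw hv)
  calc t ^ 2 * u * r ^ 2 + (w + v) ^ 2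
      ≤ t ^ 2 * u * r ^ 2 + (|zp| + t * u / 2) ^ 2 :=
        add_le_add_right (sq_le_sq' (neg_le_of_abs_le hwv) (le_of_abs_le hwv)) _
    _ = zp ^ 2 + u * (t ^ 2 * r ^ 2 + t * |zp| + t ^ 2 * u / 4) := by rw [← sq_abs zp]; ring
    _ ≤ zp ^ 2 + u * (t ^ 2 * r ^ 2 + t * (α * r ^ 2) + t ^ 2 * (α ^ 2 * r ^ 2) / 4) := by
        gcongr
    _ = zp ^ 2 + u * r ^ 2 * ((1 + α ^ 2 / 4) * t ^ 2 + α * t) := by ring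
    _ ≤ zp ^ 2 + u * r ^ 2 := by
        linarith [mul_le_mul_of_nonneg_left htα (mul_nonneg hu (sq_nonneg r))]
    _ = α ^ 2 * r ^ 4 := by linarith

lemma tan_condition_of_le {α t : ℝ} (hα : 0 ≤ α) (ht : 0 ≤ t)
    (htα : t ≤ 1 / (2 * (1 + α))) :
    (1 + α ^ 2 / 4) * t ^ 2 + α * t ≤ 1 := by
  have h : t * (2 * (1 + α)) ≤ 1 := (le_div_iff₀ (by positivity)).1 htα
  nlinarith [mul_nonneg ht hα, mul_nonneg (mul_nonneg ht hα) hα]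

lemma tan_nonneg_and_le_of_le_arctan {θ c : ℝ} (hθ : 0 < θ) (hθc : θ ≤ arctan c) :
    0 ≤ tan θ ∧ tan θ ≤ c := by
  have hθπ : θ < π / 2 := hθc.trans_lt (arctan_lt_pi_div_two c)
  refine ⟨(tan_pos_of_pos_of_lt_pi_div_two hθ hθπ).le, ?_⟩
  rwa [← arctan_tan (by linarith [pi_pos]) hθπ, arctan_strictMono.le_iff_le] at hθc

theorem stmt10_general (α : ℝ) (hα : 0 < α) :
    ∃ θ₂ : ℝ, 0 < θ₂ ∧ θ₂ < π / 2 ∧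
      ∀ θ : ℝ, 0 < θ → θ ≤ θ₂ → ∀ p : H, p ≠ 0 → ∀ z : ℝ, |z - p.2.2| ≤ |p.2.2| →
        dA α p ((0, 0, z) : H) ≤ dA α 0 p ∧
        dA α p ((2 * p.1, 2 * p.2.1, z) : H) ≤ dA α 0 p ∧
        dA α p ((p.1 - p.2.1 * Real.tan θ, p.2.1 + p.1 * Real.tan θ, z) : H) ≤ dA α 0 p ∧
        dA α p ((p.1 + p.2.1 * Real.tan θ, p.2.1 - p.1 * Real.tan θ, z) : H) ≤ dA α 0 p ∧
        convexHull ℝ ({((0 : ℝ), (0 : ℝ), z), (2 * p.1, 2 * p.2.1, z),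
            (p.1 - p.2.1 * Real.tan θ, p.2.1 + p.1 * Real.tan θ, z),
            (p.1 + p.2.1 * Real.tan θ, p.2.1 - p.1 * Real.tan θ, z)} : Set H) ⊆
          {q : H | dA α p q ≤ dA α 0 p} := by
  refine ⟨arctan (1 / (2 * (1 + α))), arctan_pos.2 (by positivity), arctan_lt_pi_div_two _, ?_⟩
  intro θ hθ hθ₂ p hp z hz
  obtain ⟨ht, htα⟩ := tan_nonneg_and_le_of_le_arctan hθ hθ₂
  have hr := dA_zero_pos hα.ne' hp
  have hE := dA_zero_quartic hα.ne' p
  obtain ⟨x, y, zp⟩ := p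
  set r := dA α 0 (x, y, zp)
  set t := tan θ
  have hvert : (x ^ 2 + y ^ 2) * r ^ 2 + (z - zp) ^ 2 ≤ α ^ 2 * r ^ 4 := by
    linarith [sq_le_sq.2 hz]
  have hrot (v : ℝ) (hv : |v| ≤ t * (x ^ 2 + y ^ 2) / 2) :=
    rotated_vertex_le hα.le hr (by positivity) ht hE hz hv (tan_condition_of_le hα.le ht htα)
  have h₁ : dA α (x, y, zp) (0, 0, z) ≤ r := by
    rw [dA_le_iff hα hr]; linear_combination hvert
  have h₂ : dA α (x, y, zp) (2 * x, 2 * y, z) ≤ r := by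
    rw [dA_le_iff hα hr]; linear_combination hvert
  have h₃ : dA α (x, y, zp) (x - y * t, y + x * t, z) ≤ r := by
    rw [dA_le_iff hα hr]
    linear_combination
      hrot (-(t * (x ^ 2 + y ^ 2) / 2)) (by rw [abs_neg, abs_of_nonneg (by positivity)])
  have h₄ : dA α (x, y, zp) (x + y * t, y - x * t, z) ≤ r := by
    rw [dA_le_iff hα hr]
    linear_combination hrot (t * (x ^ 2 + y ^ 2) / 2) (abs_of_nonneg (by positivity)).le
  refine ⟨h₁, h₂, h₃, h₄, convexHull_min ?_ (convex_setOf_dA_le hα hr _)⟩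
  simpa only [insert_subset_iff, singleton_subset_iff] using ⟨h₁, h₂, h₃, h₄⟩

theorem stmt10 (α : ℝ) (hα : 0 < α) (hα2 : α ≤ 2) :
    ∃ θ₂ : ℝ, 0 < θ₂ ∧ θ₂ < π / 2 ∧
      ∀ θ : ℝ, 0 < θ → θ ≤ θ₂ → ∀ p : H, p ≠ 0 → ∀ z : ℝ, |z - p.2.2| ≤ |p.2.2| →
        dA α p ((0, 0, z) : H) ≤ dA α 0 p ∧
        dA α p ((2 * p.1, 2 * p.2.1, z) : H) ≤ dA α 0 p ∧
        dA α p ((p.1 - p.2.1 * Real.tan θ, p.2.1 + p.1 * Real.tan θ, z) : H) ≤ dA α 0 p ∧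
        dA α p ((p.1 + p.2.1 * Real.tan θ, p.2.1 - p.1 * Real.tan θ, z) : H) ≤ dA α 0 p ∧
        convexHull ℝ ({((0 : ℝ), (0 : ℝ), z), (2 * p.1, 2 * p.2.1, z),
            (p.1 - p.2.1 * Real.tan θ, p.2.1 + p.1 * Real.tan θ, z),
            (p.1 + p.2.1 * Real.tan θ, p.2.1 - p.1 * Real.tan θ, z)} : Set H) ⊆
          {q : H | dA α p q ≤ dA α 0 p} :=
  stmt10_general α hα
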